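/- arXiv:2210.02482 — 5 statements merged into one kernel-verified Lean document; each statement's English description precedes it below -/
import Mathlib

section
/- If V : ℝᵈ → ℝ is twice continuously differentiable with 1-Lipschitz gradient, x ∈ ℝᵈ satisfies ‖∇V(x)‖ ≤ ε, β = d/ε², the measure π_β with density proportional to exp(-βV) is well-defined, and μ_β is the Gaussian N(x, β⁻¹ I_d), then the relative Fisher information satisfies FI(μ_β ‖ π_β) = ∫ ‖∇ln μ_β - ∇ln π_β‖² dμ_β ≤ 10 β d. -/
/-!
Since `∇V` is 1-Lipschitz and `‖∇V x‖ ≤ ε`, we have `‖∇V y - (y - x)‖ ≤ ε + 2‖y - x‖`, so the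
integrand is at most `β² (2ε² + 8‖y - x‖²)`. Under `N(x, β⁻¹ I)` the second moment `‖y - x‖²`
integrates to `d / β`: in polar coordinates both `∫ ‖y‖² e^{-b‖y‖²}` and `∫ e^{-b‖y‖²}` become
Gamma integrals, and `Γ(s + 1) = s Γ(s)` gives their ratio `d / (2b)`. With `β ε² = d` the bound
integrates to `2βd + 8βd`.
-/

open MeasureTheory Real Set Metric Module

section WithDensity

variable {α : Type*} [MeasurableSpace α] {μ : Measure α} {g : α → ℝ}

lemma integral_withDensity_ofReal (hg : Measurable g) (hg0 : ∀ a, 0 ≤ g a) (f : α → ℝ) :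
    ∫ a, f a ∂μ.withDensity (fun a => ENNReal.ofReal (g a)) = ∫ a, g a * f a ∂μ := by
  rw [integral_withDensity_eq_integral_toReal_smul hg.ennreal_ofReal
    (ae_of_all _ fun _ => ENNReal.ofReal_lt_top)]
  simp_rw [ENNReal.toReal_ofReal (hg0 _), smul_eq_mul]

lemma integrable_withDensity_ofReal_iff (hg : Measurable g) (hg0 : ∀ a, 0 ≤ g a) {f : α → ℝ} :
    Integrable f (μ.withDensity fun a => ENNReal.ofReal (g a)) ↔
      Integrable (fun a => g a * f a) μ := by
  rw [integrable_withDensity_iff_integrable_smul' hg.ennreal_ofReal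
    (ae_of_all _ fun _ => ENNReal.ofReal_lt_top)]
  simp_rw [ENNReal.toReal_ofReal (hg0 _), smul_eq_mul]

lemma isProbabilityMeasure_withDensity_ofReal (hg : Integrable g μ) (hg0 : ∀ a, 0 ≤ g a)
    (hg1 : ∫ a, g a ∂μ = 1) :
    IsProbabilityMeasure (μ.withDensity fun a => ENNReal.ofReal (g a)) := by
  constructor
  rw [withDensity_apply _ MeasurableSet.univ, Measure.restrict_univ,
    ← ofReal_integral_eq_lintegral_ofReal hg (ae_of_all _ hg0), hg1, ENNReal.ofReal_one]

end WithDensity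

lemma integral_Ioi_pow_mul_exp_neg_mul_sq (m : ℕ) {b : ℝ} (hb : 0 < b) :
    ∫ y in Ioi (0 : ℝ), y ^ m * exp (-b * y ^ 2)
      = b ^ (-(m + 1) / 2 : ℝ) * (1 / 2) * Gamma ((m + 1) / 2) := by
  rw [← integral_rpow_mul_exp_neg_mul_rpow two_pos (neg_one_lt_zero.trans_le m.cast_nonneg) hb]
  simp_rw [rpow_natCast, rpow_two]

lemma integral_Ioi_pow_add_two_mul_exp_neg_mul_sq (m : ℕ) {b : ℝ} (hb : 0 < b) :
    ∫ y in Ioi (0 : ℝ), y ^ (m + 2) * exp (-b * y ^ 2)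
      = (m + 1) / (2 * b) * ∫ y in Ioi (0 : ℝ), y ^ m * exp (-b * y ^ 2) := by
  rw [integral_Ioi_pow_mul_exp_neg_mul_sq _ hb, integral_Ioi_pow_mul_exp_neg_mul_sq _ hb,
    Nat.cast_add, show ((m : ℝ) + (2 : ℕ) + 1) / 2 = (m + 1) / 2 + 1 by push_cast; ring,
    Gamma_add_one (by positivity),
    show -((m : ℝ) + (2 : ℕ) + 1) / 2 = -(m + 1) / 2 + -1 by push_cast; ring,
    rpow_add hb, rpow_neg_one]
  field_simp

section Radial

variable {E : Type*} [NormedAddCommGroup E] [NormedSpace ℝ E] [FiniteDimensional ℝ E]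
  [Nontrivial E] [MeasurableSpace E] [BorelSpace E] (μ : Measure E) [μ.IsAddHaarMeasure]

lemma integrable_norm_pow_mul_exp_neg_mul_sq_norm (k : ℕ) {b : ℝ} (hb : 0 < b) :
    Integrable (fun x => ‖x‖ ^ k * exp (-b * ‖x‖ ^ 2)) μ := by
  rw [integrable_fun_norm_addHaar μ (f := fun y => y ^ k * exp (-b * y ^ 2))]
  convert integrableOn_rpow_mul_exp_neg_mul_rpow (s := ((finrank ℝ E - 1 + k : ℕ) : ℝ))
    (neg_one_lt_zero.trans_le (Nat.cast_nonneg _)) two_pos hb using 2 with y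
  rw [rpow_natCast, rpow_two, smul_eq_mul, pow_add, mul_assoc]

lemma integral_sq_norm_mul_exp_neg_mul_sq_norm {b : ℝ} (hb : 0 < b) :
    ∫ x, ‖x‖ ^ 2 * exp (-b * ‖x‖ ^ 2) ∂μ
      = finrank ℝ E / (2 * b) * ∫ x, exp (-b * ‖x‖ ^ 2) ∂μ := by
  have hn : ((finrank ℝ E - 1 : ℕ) : ℝ) + 1 = finrank ℝ E := by
    rw [Nat.cast_sub finrank_pos]; ring
  rw [integral_fun_norm_addHaar μ (fun y => y ^ 2 * exp (-b * y ^ 2)),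
    integral_fun_norm_addHaar μ (fun y => exp (-b * y ^ 2))]
  simp_rw [smul_eq_mul, ← mul_assoc, ← pow_add,
    integral_Ioi_pow_add_two_mul_exp_neg_mul_sq _ hb, hn]
  ring

end Radial

section Gaussian

variable {E : Type*} [NormedAddCommGroup E] [InnerProductSpace ℝ E] [FiniteDimensional ℝ E]
  [MeasurableSpace E] [BorelSpace E]

lemma integral_exp_neg_half_mul_sq_norm {β : ℝ} (hβ : 0 < β) :
    ∫ y : E, exp (-(β / 2) * ‖y‖ ^ 2) = ((β / (2 * π)) ^ ((finrank ℝ E : ℝ) / 2))⁻¹ := by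
  rw [GaussianFourier.integral_rexp_neg_mul_sq_norm (half_pos hβ), ← inv_rpow (by positivity),
    inv_div]
  congr 1
  ring

/-- The Gaussian `N(x, β⁻¹ I)`. -/
noncomputable def isotropicGaussian (x : E) (β : ℝ) : Measure E :=
  volume.withDensity fun y =>
    ENNReal.ofReal ((β / (2 * π)) ^ ((finrank ℝ E : ℝ) / 2) * exp (-(β / 2) * ‖y - x‖ ^ 2))

variable [Nontrivial E] {β : ℝ} (x : E) (hβ : 0 < β)
include hβ

lemma isProbabilityMeasure_isotropicGaussian : IsProbabilityMeasure (isotropicGaussian x β) := by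
  have hint := (integrable_norm_pow_mul_exp_neg_mul_sq_norm (volume : Measure E) 0
    (half_pos hβ)).comp_sub_right x
  simp only [pow_zero, one_mul] at hint
  refine isProbabilityMeasure_withDensity_ofReal (hint.const_mul _) (fun _ => by positivity) ?_
  rw [integral_const_mul, integral_sub_right_eq_self (fun y => exp (-(β / 2) * ‖y‖ ^ 2)),
    integral_exp_neg_half_mul_sq_norm hβ, mul_inv_cancel₀ (by positivity)]

lemma integrable_sq_norm_sub_isotropicGaussian :
    Integrable (fun y => ‖y - x‖ ^ 2) (isotropicGaussian x β) := by
  rw [isotropicGaussian, integrable_withDensity_ofReal_iff (by fun_prop) (fun _ => by positivity)]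
  refine (((integrable_norm_pow_mul_exp_neg_mul_sq_norm volume 2 (half_pos hβ)).comp_sub_right
    x).const_mul ((β / (2 * π)) ^ ((finrank ℝ E : ℝ) / 2))).congr (ae_of_all _ fun y => ?_)
  ring

lemma integral_sq_norm_sub_isotropicGaussian :
    ∫ y, ‖y - x‖ ^ 2 ∂isotropicGaussian x β = finrank ℝ E / β := by
  rw [isotropicGaussian, integral_withDensity_ofReal (by fun_prop) (fun _ => by positivity)]
  simp_rw [mul_assoc, mul_comm (exp _)]
  rw [integral_const_mul, integral_sub_right_eq_self (fun y => ‖y‖ ^ 2 * exp (-(β / 2) * ‖y‖ ^ 2)),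
    integral_sq_norm_mul_exp_neg_mul_sq_norm volume (half_pos hβ),
    integral_exp_neg_half_mul_sq_norm hβ]
  field_simp

end Gaussian

section Lipschitz

variable {E : Type*} [SeminormedAddCommGroup E] {f : E → E}

lemma norm_apply_sub_sub_le_of_lipschitzWith_one (hf : LipschitzWith 1 f) (x y : E) :
    ‖f y - (y - x)‖ ≤ ‖f x‖ + 2 * ‖y - x‖ := by
  have hfyx : ‖f y - f x‖ ≤ ‖y - x‖ := by simpa [dist_eq_norm] using hf.dist_le_mul y x
  calc ‖f y - (y - x)‖ = ‖(f y - f x) + f x - (y - x)‖ := by abel_nf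
    _ ≤ ‖f y - f x‖ + ‖f x‖ + ‖y - x‖ := (norm_sub_le _ _).trans (by gcongr; exact norm_add_le _ _)
    _ ≤ ‖f x‖ + 2 * ‖y - x‖ := by linarith

lemma sq_norm_apply_sub_sub_le_of_lipschitzWith_one (hf : LipschitzWith 1 f) {x : E} {ε : ℝ}
    (hx : ‖f x‖ ≤ ε) (y : E) : ‖f y - (y - x)‖ ^ 2 ≤ 2 * ε ^ 2 + 8 * ‖y - x‖ ^ 2 := by
  have h := norm_apply_sub_sub_le_of_lipschitzWith_one hf x y
  nlinarith [norm_nonneg (f y - (y - x)), norm_nonneg (f x), sq_nonneg (ε - 2 * ‖y - x‖)]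

end Lipschitz

theorem stmt0_general (d : ℕ) (hd : 1 ≤ d)
    (V : EuclideanSpace ℝ (Fin d) → ℝ) (ε β : ℝ) (hε : 0 < ε)
    (hLip : LipschitzWith 1 (gradient V))
    (x : EuclideanSpace ℝ (Fin d)) (hx : ‖gradient V x‖ ≤ ε)
    (hβ : β = d / ε ^ 2)
    (μβ : Measure (EuclideanSpace ℝ (Fin d)))
    (hμβ : μβ = volume.withDensity
      (fun y => ENNReal.ofReal ((β / (2 * π)) ^ ((d : ℝ) / 2)
        * Real.exp (-β * ‖y - x‖ ^ 2 / 2)))) :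
    ∫ y, ‖β • gradient V y - β • (y - x)‖ ^ 2 ∂μβ ≤ 10 * β * d := by
  have hβ0 : 0 < β := hβ ▸ div_pos (by exact_mod_cast hd) (by positivity)
  have : Nonempty (Fin d) := ⟨⟨0, hd⟩⟩
  obtain rfl : μβ = isotropicGaussian x β := by
    rw [hμβ, isotropicGaussian, finrank_euclideanSpace_fin]
    congr! 5
    ring
  have := isProbabilityMeasure_isotropicGaussian x hβ0
  have hbound : Integrable (fun y => β ^ 2 * (2 * ε ^ 2 + 8 * ‖y - x‖ ^ 2)) (isotropicGaussian x β) :=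
    ((integrable_const _).add ((integrable_sq_norm_sub_isotropicGaussian x hβ0).const_mul _)).const_mul _
  calc ∫ y, ‖β • gradient V y - β • (y - x)‖ ^ 2 ∂isotropicGaussian x β
      ≤ ∫ y, β ^ 2 * (2 * ε ^ 2 + 8 * ‖y - x‖ ^ 2) ∂isotropicGaussian x β := by
        refine integral_mono_of_nonneg (ae_of_all _ fun _ => sq_nonneg _) hbound
          (ae_of_all _ fun y => ?_)
        dsimp only
        rw [← smul_sub, norm_smul, norm_of_nonneg hβ0.le, mul_pow]
        gcongr
        exact sq_norm_apply_sub_sub_le_of_lipschitzWith_one hLip hx y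
    _ = β ^ 2 * (2 * ε ^ 2 + 8 * (d / β)) := by
      rw [integral_const_mul, integral_add (integrable_const _)
        ((integrable_sq_norm_sub_isotropicGaussian x hβ0).const_mul _), integral_const,
        integral_const_mul, integral_sq_norm_sub_isotropicGaussian x hβ0,
        finrank_euclideanSpace_fin, probReal_univ, one_smul]
    _ = 10 * β * d := by
      rw [hβ]
      field_simp
      ring

theorem stmt0 (d : ℕ) (hd : 1 ≤ d)
    (V : EuclideanSpace ℝ (Fin d) → ℝ) (ε β : ℝ) (hε : 0 < ε)
    (hV : ContDiff ℝ 2 V) (hLip : LipschitzWith 1 (gradient V))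
    (x : EuclideanSpace ℝ (Fin d)) (hx : ‖gradient V x‖ ≤ ε)
    (hβ : β = d / ε ^ 2)
    (hint : Integrable (fun y => Real.exp (-β * V y)))
    (μβ : Measure (EuclideanSpace ℝ (Fin d)))
    (hμβ : μβ = volume.withDensity
      (fun y => ENNReal.ofReal ((β / (2 * π)) ^ ((d : ℝ) / 2)
        * Real.exp (-β * ‖y - x‖ ^ 2 / 2)))) :
    ∫ y, ‖β • gradient V y - β • (y - x)‖ ^ 2 ∂μβ ≤ 10 * β * d :=
  stmt0_general d hd V ε β hε hLip x hx hβ μβ hμβ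
end

section
/- Let φ : ℝ₊ → ℝ₊ be continuous, decreasing, supported on [0,1], twice continuously differentiable on (0,∞), with φ(x) = φ(0) - x²/2 on [0,α] for some α > 0, and sup_{x>0} |φ''(x)| ≤ 1. Then the function x ↦ φ(‖x‖) on ℝᵈ is 1-smooth, i.e., its gradient is 1-Lipschitz. -/
/-!
Away from the origin the gradient of `x ↦ φ ‖x‖` is `(φ'(r) / r) x` with `r = ‖x‖`, whose
derivative `(φ'(r) / r) I + c x xᵀ` has eigenvalues `φ'(r) / r` and `φ''(r)`. The bound
`|φ''| ≤ 1` controls the second directly, and the first too because `φ'(s) = -s` near `0`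
gives `|φ'(r)| ≤ r`. Near the origin the gradient is `-x`. So the gradient has derivative of
norm at most `1` everywhere, and the mean value inequality makes it `1`-Lipschitz.
-/

open Real Set
open scoped RealInnerProductSpace NNReal

section Radial

variable {E : Type*} [NormedAddCommGroup E] [InnerProductSpace ℝ E]

theorem hasFDerivAt_norm {x : E} (hx : x ≠ 0) :
    HasFDerivAt (‖·‖) (‖x‖⁻¹ • innerSL ℝ x) x := by
  have hsq := (hasDerivAt_sqrt (pow_pos (norm_pos_iff.mpr hx) 2).ne').comp_hasFDerivAt x
    (hasStrictFDerivAt_norm_sq x).hasFDerivAt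
  have hfun : (sqrt ∘ fun y : E => ‖y‖ ^ 2) = (‖·‖) := by
    ext y; simp [sqrt_sq (norm_nonneg y)]
  rw [hfun, sqrt_sq (norm_nonneg x)] at hsq
  refine hsq.congr_fderiv ?_
  rw [← Nat.cast_smul_eq_nsmul ℝ, smul_smul]
  congr 1
  field_simp
  norm_num

theorem HasDerivAt.hasGradientAt_comp_norm [CompleteSpace E] {ψ : ℝ → ℝ} {ψ' : ℝ} {x : E}
    (hψ : HasDerivAt ψ ψ' ‖x‖) (hx : x ≠ 0) :
    HasGradientAt (fun y => ψ ‖y‖) ((ψ' / ‖x‖) • x) x := by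
  refine (hψ.comp_hasFDerivAt x (hasFDerivAt_norm hx)).congr_fderiv ?_
  ext v
  simp only [smul_apply, coe_innerSL_apply, smul_eq_mul, map_smul,
    InnerProductSpace.toDual_apply_apply]
  ring

theorem HasDerivAt.hasFDerivAt_smul_comp_norm {h : ℝ → ℝ} {h' : ℝ} {x : E}
    (hh : HasDerivAt h h' ‖x‖) (hx : x ≠ 0) :
    HasFDerivAt (fun y => h ‖y‖ • y)
      (h ‖x‖ • ContinuousLinearMap.id ℝ E + (h' / ‖x‖) • (innerSL ℝ x).smulRight x) x := by
  refine ((hh.comp_hasFDerivAt x (hasFDerivAt_norm hx)).smul (hasFDerivAt_id x)).congr_fderiv ?_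
  ext v
  simp only [Function.comp_apply, smul_smul, id_eq, add_apply,
    smul_apply, ContinuousLinearMap.id_apply,
    ContinuousLinearMap.smulRight_apply, coe_innerSL_apply, smul_eq_mul, add_right_inj]
  ring_nf

-- `a I + c x xᵀ` acts as `a` on `x⊥` and as `a + c ‖x‖²` on `x`.
theorem norm_smul_id_add_smul_smulRight_innerSL_le (x : E) (a c : ℝ) :
    ‖a • ContinuousLinearMap.id ℝ E + c • (innerSL ℝ x).smulRight x‖
      ≤ max |a| |a + c * ‖x‖ ^ 2| := by
  set M := max |a| |a + c * ‖x‖ ^ 2|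
  have hM : 0 ≤ M := le_max_of_le_left (abs_nonneg a)
  refine ContinuousLinearMap.opNorm_le_bound _ hM fun v => ?_
  set s := ⟪x, v⟫
  have hcs : s ^ 2 ≤ ‖x‖ ^ 2 * ‖v‖ ^ 2 := by
    rw [← mul_pow, ← sq_abs s]
    exact pow_le_pow_left₀ (abs_nonneg s) (abs_real_inner_le_norm x v) 2
  have hexp : ‖a • v + (c * s) • x‖ ^ 2
      = a ^ 2 * ‖v‖ ^ 2 + (2 * a * c + c ^ 2 * ‖x‖ ^ 2) * s ^ 2 := by
    rw [norm_add_sq_real, real_inner_smul_left, real_inner_smul_right, norm_smul, norm_smul,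
      real_inner_comm]
    simp only [norm_eq_abs, mul_pow, sq_abs]
    ring
  have ha : a ^ 2 ≤ M ^ 2 := sq_le_sq.mpr (by rw [abs_of_nonneg hM]; exact le_max_left _ _)
  have hac : (a + c * ‖x‖ ^ 2) ^ 2 ≤ M ^ 2 :=
    sq_le_sq.mpr (by rw [abs_of_nonneg hM]; exact le_max_right _ _)
  have hsq : ‖a • v + (c * s) • x‖ ^ 2 ≤ (M * ‖v‖) ^ 2 := by
    rw [hexp, mul_pow]
    rcases le_or_gt 0 (2 * a * c + c ^ 2 * ‖x‖ ^ 2) with h | h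
    · nlinarith [mul_le_mul_of_nonneg_left hcs h, sq_nonneg ‖v‖]
    · nlinarith [mul_nonpos_of_nonpos_of_nonneg h.le (sq_nonneg s), sq_nonneg ‖v‖]
  have hv : (a • ContinuousLinearMap.id ℝ E + c • (innerSL ℝ x).smulRight x) v
      = a • v + (c * s) • x := by
    simp [mul_smul, s]
  rw [hv]
  exact pow_le_pow_iff_left₀ (norm_nonneg _) (by positivity) two_ne_zero |>.mp hsq

end Radial

section Profile

variable {φ : ℝ → ℝ}

theorem deriv_eq_neg_of_eq_sub_sq_div_two {α r : ℝ}
    (hquad : ∀ x ∈ Icc 0 α, φ x = φ 0 - x ^ 2 / 2) (hr : r ∈ Ioo 0 α) : deriv φ r = -r := by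
  have hev : φ =ᶠ[nhds r] fun t => φ 0 - t ^ 2 / 2 :=
    Filter.eventually_of_mem (Ioo_mem_nhds hr.1 hr.2) fun t ht => hquad t (Ioo_subset_Icc_self ht)
  have hderiv : HasDerivAt (fun t => φ 0 - t ^ 2 / 2) (-r) r := by
    simpa using ((hasDerivAt_pow 2 r).div_const 2).const_sub (φ 0)
  exact (hderiv.congr_of_eventuallyEq hev).deriv

theorem ContDiffOn.differentiableAt_deriv {s : Set ℝ} {x : ℝ} (hφ : ContDiffOn ℝ 2 φ s)
    (hs : IsOpen s) (hx : x ∈ s) : DifferentiableAt ℝ (deriv φ) x :=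
  ((hφ.deriv_of_isOpen hs (by norm_num : (1 : WithTop ℕ∞) + 1 ≤ 2)).contDiffAt
    (hs.mem_nhds hx)).differentiableAt one_ne_zero

theorem ContDiffOn.lipschitzOnWith_deriv {s : Set ℝ} {K : ℝ≥0} (hφ : ContDiffOn ℝ 2 φ s)
    (hs : IsOpen s) (hconv : Convex ℝ s) (hK : ∀ x ∈ s, |deriv (deriv φ) x| ≤ K) :
    LipschitzOnWith K (deriv φ) s :=
  hconv.lipschitzOnWith_of_nnnorm_deriv_le (fun _ hx => hφ.differentiableAt_deriv hs hx)
    fun x hx => by rw [← NNReal.coe_le_coe, coe_nnnorm]; exact hK x hx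

-- Compare with a point `s ∈ (0, α)`, where `φ'(s) = -s`.
theorem abs_deriv_le_self_of_eq_sub_sq_div_two {α r : ℝ} (hα : 0 < α)
    (hquad : ∀ x ∈ Icc 0 α, φ x = φ 0 - x ^ 2 / 2)
    (hlip : LipschitzOnWith 1 (deriv φ) (Ioi 0)) (hr : 0 < r) : |deriv φ r| ≤ r := by
  obtain ⟨s, hs, hsα, hsr⟩ : ∃ s, 0 < s ∧ s < α ∧ s < r :=
    ⟨min α r / 2, by positivity, by linarith [min_le_left α r], by linarith [min_le_right α r]⟩
  have hφs : deriv φ s = -s := deriv_eq_neg_of_eq_sub_sq_div_two hquad ⟨hs, hsα⟩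
  have h := hlip.dist_le_mul r hr s hs
  rw [dist_eq, dist_eq, hφs, NNReal.coe_one, one_mul, abs_of_pos (sub_pos.2 hsr)] at h
  obtain ⟨h₁, h₂⟩ := abs_le.mp h
  exact abs_le.mpr ⟨by linarith, by linarith⟩

end Profile

section RadialProfile

variable {E : Type*} [NormedAddCommGroup E] [InnerProductSpace ℝ E] {φ : ℝ → ℝ} {α : ℝ}

theorem gradient_comp_norm [CompleteSpace E] (hα : 0 < α) (hφ : DifferentiableOn ℝ φ (Ioi 0))
    (hquad : ∀ x ∈ Icc 0 α, φ x = φ 0 - x ^ 2 / 2) :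
    gradient (fun x : E => φ ‖x‖) = fun x => (deriv φ ‖x‖ / ‖x‖) • x := by
  funext x
  rcases eq_or_ne x 0 with rfl | hx
  · have hev : (fun y : E => φ ‖y‖) =ᶠ[nhds 0] fun y => φ 0 - ‖y‖ ^ 2 / 2 :=
      Filter.eventually_of_mem (Metric.ball_mem_nhds 0 hα) fun y hy =>
        hquad ‖y‖ ⟨norm_nonneg y, (mem_ball_zero_iff.mp hy).le⟩
    have hgrad : HasGradientAt (fun y : E => φ 0 - ‖y‖ ^ 2 / 2) 0 0 := by
      have := ((hasStrictFDerivAt_norm_sq (0 : E)).hasFDerivAt.mul_const 2⁻¹).const_sub (φ 0)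
      simpa [hasGradientAt_iff_hasFDerivAt, div_eq_mul_inv] using this
    simpa using (hgrad.congr_of_eventuallyEq hev).gradient
  · have hr : 0 < ‖x‖ := norm_pos_iff.mpr hx
    exact ((hφ.differentiableAt (isOpen_Ioi.mem_nhds hr)).hasDerivAt.hasGradientAt_comp_norm
      hx).gradient

theorem lipschitzWith_deriv_div_norm_smul (hα : 0 < α) (hφ : ContDiffOn ℝ 2 φ (Ioi 0))
    (hquad : ∀ x ∈ Icc 0 α, φ x = φ 0 - x ^ 2 / 2)
    (hdd : ∀ x > (0 : ℝ), |deriv (deriv φ) x| ≤ 1) :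
    LipschitzWith 1 (fun x : E => (deriv φ ‖x‖ / ‖x‖) • x) := by
  set g := fun x : E => (deriv φ ‖x‖ / ‖x‖) • x
  have hlip : LipschitzOnWith 1 (deriv φ) (Ioi 0) :=
    hφ.lipschitzOnWith_deriv isOpen_Ioi (convex_Ioi 0) (by simpa using hdd)
  have hderiv : ∀ x, ∃ L : E →L[ℝ] E, HasFDerivAt g L x ∧ ‖L‖ ≤ 1 := by
    intro x
    rcases eq_or_ne x 0 with rfl | hx
    · refine ⟨-ContinuousLinearMap.id ℝ E, ?_, by simpa using ContinuousLinearMap.norm_id_le⟩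
      have hev : g =ᶠ[nhds 0] fun y => -y := by
        refine Filter.eventually_of_mem (Metric.ball_mem_nhds 0 hα) fun y hy => ?_
        rcases eq_or_ne y 0 with rfl | hy0
        · simp [g]
        have hy' : 0 < ‖y‖ := norm_pos_iff.mpr hy0
        simp only [g, deriv_eq_neg_of_eq_sub_sq_div_two hquad ⟨hy', mem_ball_zero_iff.mp hy⟩,
          neg_div, div_self hy'.ne', neg_smul, one_smul]
      exact (hasFDerivAt_id 0).neg.congr_of_eventuallyEq hev
    · set r := ‖x‖
      have hr : 0 < r := norm_pos_iff.mpr hx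
      have hquot : HasDerivAt (fun t => deriv φ t / t)
          ((deriv (deriv φ) r * r - deriv φ r * 1) / r ^ 2) r :=
        (hφ.differentiableAt_deriv isOpen_Ioi hr).hasDerivAt.div (hasDerivAt_id r) hr.ne'
      refine ⟨_, hquot.hasFDerivAt_smul_comp_norm hx,
        (norm_smul_id_add_smul_smulRight_innerSL_le x _ _).trans (max_le ?_ ?_)⟩
      · rw [abs_div, abs_of_pos hr, div_le_one hr]
        exact abs_deriv_le_self_of_eq_sub_sq_div_two hα hquad hlip hr
      · have hradial : deriv φ r / r + (deriv (deriv φ) r * r - deriv φ r * 1) / r ^ 2 / r * r ^ 2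
            = deriv (deriv φ) r := by
          field_simp
          ring
        rw [hradial]
        exact hdd r hr
  choose L hL hLnorm using hderiv
  rw [← lipschitzOnWith_univ]
  exact convex_univ.lipschitzOnWith_of_nnnorm_hasFDerivWithin_le
    (fun x _ => (hL x).hasFDerivWithinAt)
    fun x _ => by rw [← NNReal.coe_le_coe, coe_nnnorm]; exact hLnorm x

end RadialProfile

theorem stmt6_general (d : ℕ) (φ : ℝ → ℝ) (α : ℝ) (hα : 0 < α)
    (hC2 : ContDiffOn ℝ 2 φ (Ioi 0))
    (hquad : ∀ x ∈ Icc 0 α, φ x = φ 0 - x ^ 2 / 2)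
    (hdd : ∀ x > (0 : ℝ), |deriv (deriv φ) x| ≤ 1) :
    LipschitzWith 1 (gradient (fun x : EuclideanSpace ℝ (Fin d) => φ ‖x‖)) := by
  rw [gradient_comp_norm hα (hC2.differentiableOn two_ne_zero) hquad]
  exact lipschitzWith_deriv_div_norm_smul hα hC2 hquad hdd

theorem stmt6 (d : ℕ) (φ : ℝ → ℝ) (α : ℝ) (hα : 0 < α)
    (hcont : ContinuousOn φ (Ici 0))
    (hnonneg : ∀ x ≥ (0 : ℝ), 0 ≤ φ x)
    (hdec : AntitoneOn φ (Ici 0))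
    (hsupp : ∀ x > (1 : ℝ), φ x = 0)
    (hC2 : ContDiffOn ℝ 2 φ (Ioi 0))
    (hquad : ∀ x ∈ Icc 0 α, φ x = φ 0 - x ^ 2 / 2)
    (hdd : ∀ x > (0 : ℝ), |deriv (deriv φ) x| ≤ 1) :
    LipschitzWith 1 (gradient (fun x : EuclideanSpace ℝ (Fin d) => φ ‖x‖)) :=
  stmt6_general d φ α hα hC2 hquad hdd
end

section
/- With π̃_ω(x) = exp(r²φ(‖x-ω‖/r) - (1/2)((‖x‖-R)₊)²), ‖ω‖ ≤ R - r, and φ decreasing and supported on [0,1], if the parameters satisfy (I_r + V_d)rᵈ = π̃_ω(ℝᵈ∖B_R) + V_d Rᵈ where I_r = ∫_{B₁} exp(r²φ(‖x‖)) dx and V_d is the volume of the unit ball, then the normalized measure π_ω = π̃_ω / Z_ω satisfies π_ω(ω + B_r) = 1/2. -/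
/-!
On `ω + B_r` the confining term vanishes (since `ω + B_r ⊆ B_R`), so rescaling gives mass
`rᵈ I_r` there; on the shell `B_R ∖ (ω + B_r)` the bump vanishes as well, so `π̃_ω ≡ 1` and the
shell has mass `V_d (Rᵈ - rᵈ)`. The balance condition says exactly that the ball's mass equals
that of the shell plus the exterior of `B_R`, i.e. half of `Z_ω`.
-/

open MeasureTheory Real Set

open Metric Module

section

variable {E : Type*} [NormedAddCommGroup E] [NormedSpace ℝ E] [FiniteDimensional ℝ E]
  [MeasurableSpace E] [BorelSpace E] (μ : Measure E) [μ.IsAddHaarMeasure]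
  {F : Type*} [NormedAddCommGroup F] [NormedSpace ℝ F]

theorem setIntegral_closedBall_comp_inv_smul_sub (g : E → F) (c : E) {r : ℝ} (hr : 0 < r) :
    ∫ x in closedBall c r, g (r⁻¹ • (x - c)) ∂μ =
      r ^ finrank ℝ E • ∫ x in closedBall 0 1, g x ∂μ := by
  have hmem : ∀ x, r⁻¹ • (x - c) ∈ closedBall (0 : E) 1 ↔ x ∈ closedBall c r := fun x => by
    rw [mem_closedBall_zero_iff, norm_smul, norm_inv, Real.norm_of_nonneg hr.le,
      inv_mul_le_iff₀ hr, mul_one, mem_closedBall_iff_norm]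
  calc ∫ x in closedBall c r, g (r⁻¹ • (x - c)) ∂μ
      = ∫ x, (closedBall 0 1).indicator g (r⁻¹ • (x - c)) ∂μ := by
        rw [← integral_indicator measurableSet_closedBall]
        congr 1 with x
        by_cases hx : x ∈ closedBall c r <;> simp [hx, hmem]
    _ = ∫ x, (closedBall 0 1).indicator g (r⁻¹ • x) ∂μ :=
        integral_sub_right_eq_self (fun x => (closedBall 0 1).indicator g (r⁻¹ • x)) c
    _ = r ^ finrank ℝ E • ∫ x in closedBall 0 1, g x ∂μ := by
        rw [Measure.integral_comp_inv_smul_of_nonneg μ _ hr.le,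
          integral_indicator measurableSet_closedBall]

end

theorem integral_eq_setIntegral_add_measureReal_sdiff_add_compl {α : Type*} [MeasurableSpace α]
    {μ : Measure α} {f : α → ℝ} {s t : Set α} (hf : Integrable f μ) (hs : MeasurableSet s)
    (ht : MeasurableSet t) (hst : s ⊆ t) (hf_one : EqOn f 1 (t \ s)) (ht_fin : μ t ≠ ⊤) :
    ∫ x, f x ∂μ = ∫ x in s, f x ∂μ + (μ.real t - μ.real s) + ∫ x in tᶜ, f x ∂μ := by
  have hdiff : ∫ x in t \ s, f x ∂μ = μ.real t - μ.real s := by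
    rw [setIntegral_congr_fun (ht.diff hs) hf_one, Pi.one_def, setIntegral_const, smul_eq_mul,
      mul_one, measureReal_sdiff hst hs ht_fin]
  rw [← hdiff, ← integral_add_compl ht hf, setIntegral_sdiff hs hf.integrableOn hst]
  ring

theorem stmt9_general (d : ℕ) (φ : ℝ → ℝ)
    (hsupp : ∀ x > (1 : ℝ), φ x = 0)
    (r R : ℝ) (hr : 0 < r)
    (ω : EuclideanSpace ℝ (Fin d)) (hω : ‖ω‖ ≤ R - r)
    (πt : EuclideanSpace ℝ (Fin d) → ℝ)
    (hπt : πt = fun x =>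
      Real.exp (r ^ 2 * φ (‖x - ω‖ / r) - (1 / 2) * (max (‖x‖ - R) 0) ^ 2))
    (hint : Integrable πt)
    (Ir Vd : ℝ)
    (hIr : Ir = ∫ x in Metric.closedBall (0 : EuclideanSpace ℝ (Fin d)) 1,
      Real.exp (r ^ 2 * φ ‖x‖))
    (hVd : Vd = (volume (Metric.closedBall (0 : EuclideanSpace ℝ (Fin d)) 1)).toReal)
    (hbal : (Ir + Vd) * r ^ d =
      (∫ x in (Metric.closedBall (0 : EuclideanSpace ℝ (Fin d)) R)ᶜ, πt x) + Vd * R ^ d) :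
    ∫ x in Metric.closedBall ω r, πt x = (1 / 2) * ∫ x, πt x := by
  have hAB : closedBall ω r ⊆ closedBall 0 R :=
    closedBall_subset_closedBall' (by rw [dist_zero_right]; linarith)
  have hball : ∫ x in closedBall ω r, πt x = r ^ d * Ir := by
    have hscale := setIntegral_closedBall_comp_inv_smul_sub volume
      (fun z => Real.exp (r ^ 2 * φ ‖z‖)) ω hr
    rw [finrank_euclideanSpace_fin, smul_eq_mul] at hscale
    rw [hIr, ← hscale]
    refine setIntegral_congr_fun measurableSet_closedBall fun x hx => ?_
    have hxR : ‖x‖ ≤ R := mem_closedBall_zero_iff.1 (hAB hx)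
    simp [hπt, norm_smul, abs_of_pos hr, div_eq_inv_mul, hxR]
  have hshell : EqOn πt 1 (closedBall 0 R \ closedBall ω r) := by
    rintro x ⟨hxB, hxω⟩
    have hxR : ‖x‖ ≤ R := mem_closedBall_zero_iff.1 hxB
    have hφ : φ (‖x - ω‖ / r) = 0 :=
      hsupp _ ((one_lt_div hr).2 (by simpa [dist_eq_norm] using hxω))
    simp [hπt, hφ, hxR]
  rw [integral_eq_setIntegral_add_measureReal_sdiff_add_compl hint measurableSet_closedBall
    measurableSet_closedBall hAB hshell measure_closedBall_lt_top.ne, hball,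
    Measure.addHaar_real_closedBall' _ _ hr.le,
    Measure.addHaar_real_closedBall' _ _ (by linarith [norm_nonneg ω]),
    finrank_euclideanSpace_fin]
  rw [← measureReal_def] at hVd
  subst hVd
  linarith

theorem stmt9 (d : ℕ) (hd : 1 ≤ d) (φ : ℝ → ℝ)
    (hnn : ∀ x ≥ (0 : ℝ), 0 ≤ φ x)
    (hdec : AntitoneOn φ (Ici 0))
    (hsupp : ∀ x > (1 : ℝ), φ x = 0)
    (r R : ℝ) (hr : 0 < r) (hrR : r ≤ R)
    (ω : EuclideanSpace ℝ (Fin d)) (hω : ‖ω‖ ≤ R - r)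
    (πt : EuclideanSpace ℝ (Fin d) → ℝ)
    (hπt : πt = fun x =>
      Real.exp (r ^ 2 * φ (‖x - ω‖ / r) - (1 / 2) * (max (‖x‖ - R) 0) ^ 2))
    (hint : Integrable πt)
    (Ir Vd : ℝ)
    (hIr : Ir = ∫ x in Metric.closedBall (0 : EuclideanSpace ℝ (Fin d)) 1,
      Real.exp (r ^ 2 * φ ‖x‖))
    (hVd : Vd = (volume (Metric.closedBall (0 : EuclideanSpace ℝ (Fin d)) 1)).toReal)
    (hbal : (Ir + Vd) * r ^ d =
      (∫ x in (Metric.closedBall (0 : EuclideanSpace ℝ (Fin d)) R)ᶜ, πt x) + Vd * R ^ d) :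
    ∫ x in Metric.closedBall ω r, πt x = (1 / 2) * ∫ x, πt x :=
  stmt9_general d φ hsupp r R hr ω hω πt hπt hint Ir Vd hIr hVd hbal
end

section
/- Let π̃₀(x) = exp(-(1/2)((‖x‖-R)₊)²) on ℝᵈ with d ≥ 1 and R > 0. Then √(π/2)·V_d·d·R^{d-1} ≤ ∫_{ℝᵈ∖B_R} π̃₀(x) dx ≤ V_d·C₀ᵈ·(d R^{d-1} + d^{(d+1)/2}) for a universal constant C₀ > 2, where V_d is the volume of the unit ball in ℝᵈ. -/
/-!
In polar coordinates the integral is `d V_d ∫₀^∞ (s + R)^(d-1) e^(-s²/2) ds`. Bounding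
`(s + R)^(d-1)` below by `R^(d-1)` gives the lower bound. For the upper bound,
`(s + R)^(d-1) ≤ 2^(d-2) (s^(d-1) + R^(d-1))`, and the moment `∫ s^(d-1) e^(-s²/2)` is
controlled by the pointwise estimate `s^(d-1) ≤ 2^d d^((d+1)/2) e^(s²/4)`, which comes from
`t^n ≤ n! e^t ≤ n^n e^t` at `t = s²/4`, `n = ⌊d/2⌋`. This gives the claim with `C₀ = 8`.
-/

open MeasureTheory Real Set Metric

section Radial

variable {E F : Type*} [NormedAddCommGroup E] [NormedSpace ℝ E] [Nontrivial E]
  [FiniteDimensional ℝ E] [MeasurableSpace E] [BorelSpace E]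
  (μ : Measure E) [μ.IsAddHaarMeasure]
  [NormedAddCommGroup F] [NormedSpace ℝ F]

theorem integral_compl_closedBall_fun_norm_sub {R : ℝ} (hR : 0 ≤ R) (g : ℝ → F) :
    ∫ x in (closedBall (0 : E) R)ᶜ, g (‖x‖ - R) ∂μ =
      Module.finrank ℝ E • μ.real (ball 0 1) •
        ∫ s in Ioi (0 : ℝ), (s + R) ^ (Module.finrank ℝ E - 1) • g s := by
  have hradial : (closedBall (0 : E) R)ᶜ.indicator (fun x => g (‖x‖ - R)) =
      fun x => (Ioi R).indicator (fun r => g (r - R)) ‖x‖ := by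
    ext x
    simp [indicator, mem_closedBall]
  have hshift := (measurePreserving_add_right volume R).setIntegral_preimage_emb
    (measurableEmbedding_addRight R) (fun y => y ^ (Module.finrank ℝ E - 1) • g (y - R)) (Ioi R)
  simp only [preimage_add_const_Ioi, sub_self, add_sub_cancel_right] at hshift
  rw [← integral_indicator measurableSet_closedBall.compl, hradial, integral_fun_norm_addHaar,
    hshift, ← indicator_smul (Ioi R) (fun y : ℝ => y ^ (Module.finrank ℝ E - 1)),
    setIntegral_indicator measurableSet_Ioi, Ioi_inter_Ioi, max_eq_right hR]

end Radial

section GaussianMoments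

variable {b : ℝ}

theorem integrableOn_pow_mul_exp_neg_mul_sq (hb : 0 < b) (n : ℕ) :
    IntegrableOn (fun s : ℝ => s ^ n * exp (-b * s ^ 2)) (Ioi 0) := by
  simpa only [rpow_natCast] using
    integrableOn_rpow_mul_exp_neg_mul_sq hb (s := n) (by linarith [n.cast_nonneg (α := ℝ)])

theorem add_pow_mul_exp_neg_mul_sq_le {R s : ℝ} (hR : 0 ≤ R) (hs : 0 ≤ s) (n : ℕ) :
    (s + R) ^ n * exp (-b * s ^ 2) ≤
      2 ^ (n - 1) * (s ^ n * exp (-b * s ^ 2)) + 2 ^ (n - 1) * R ^ n * exp (-b * s ^ 2) := by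
  have := mul_le_mul_of_nonneg_right (add_pow_le hs hR n) (exp_pos (-b * s ^ 2)).le
  linarith

theorem integrableOn_add_pow_mul_exp_neg_mul_sq (hb : 0 < b) {R : ℝ} (hR : 0 ≤ R) (n : ℕ) :
    IntegrableOn (fun s : ℝ => (s + R) ^ n * exp (-b * s ^ 2)) (Ioi 0) := by
  have hmom := (integrableOn_pow_mul_exp_neg_mul_sq hb n).const_mul (2 ^ (n - 1))
  have hgauss := (integrable_exp_neg_mul_sq hb).integrableOn (s := Ioi 0)
    |>.const_mul (2 ^ (n - 1) * R ^ n)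
  refine (hmom.add hgauss).mono' (by fun_prop) ?_
  filter_upwards [ae_restrict_mem measurableSet_Ioi] with s (hs : 0 < s)
  rw [norm_of_nonneg (by positivity)]
  exact add_pow_mul_exp_neg_mul_sq_le hR hs.le n

theorem pow_mul_integral_exp_neg_mul_sq_le (hb : 0 < b) {R : ℝ} (hR : 0 ≤ R) (n : ℕ) :
    R ^ n * ∫ s in Ioi (0 : ℝ), exp (-b * s ^ 2) ≤
      ∫ s in Ioi (0 : ℝ), (s + R) ^ n * exp (-b * s ^ 2) := by
  rw [← integral_const_mul]
  refine setIntegral_mono_on ((integrable_exp_neg_mul_sq hb).integrableOn.const_mul _)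
    (integrableOn_add_pow_mul_exp_neg_mul_sq hb hR n) measurableSet_Ioi fun s (hs : 0 < s) => ?_
  gcongr
  linarith

theorem integral_add_pow_mul_exp_neg_mul_sq_le (hb : 0 < b) {R : ℝ} (hR : 0 ≤ R) (n : ℕ) :
    ∫ s in Ioi (0 : ℝ), (s + R) ^ n * exp (-b * s ^ 2) ≤
      2 ^ (n - 1) * ((∫ s in Ioi (0 : ℝ), s ^ n * exp (-b * s ^ 2)) +
        R ^ n * ∫ s in Ioi (0 : ℝ), exp (-b * s ^ 2)) := by
  have hmom := (integrableOn_pow_mul_exp_neg_mul_sq hb n).const_mul (2 ^ (n - 1))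
  have hgauss := (integrable_exp_neg_mul_sq hb).integrableOn (s := Ioi 0)
    |>.const_mul (2 ^ (n - 1) * R ^ n)
  calc ∫ s in Ioi (0 : ℝ), (s + R) ^ n * exp (-b * s ^ 2)
      ≤ ∫ s in Ioi (0 : ℝ),
          2 ^ (n - 1) * (s ^ n * exp (-b * s ^ 2)) + 2 ^ (n - 1) * R ^ n * exp (-b * s ^ 2) :=
        setIntegral_mono_on (integrableOn_add_pow_mul_exp_neg_mul_sq hb hR n) (hmom.add hgauss)
          measurableSet_Ioi fun s (hs : 0 < s) => add_pow_mul_exp_neg_mul_sq_le hR hs.le n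
    _ = _ := by
      rw [integral_add hmom hgauss, integral_const_mul, integral_const_mul]
      ring

end GaussianMoments

theorem integral_exp_neg_half_mul_sq_Ioi :
    ∫ s in Ioi (0 : ℝ), exp (-(1 / 2) * s ^ 2) = √(π / 2) := by
  rw [integral_gaussian_Ioi, div_div_eq_mul_div, div_one, show π * 2 = 2 ^ 2 * (π / 2) by ring,
    sqrt_mul (by positivity), sqrt_sq zero_le_two]
  ring

theorem sqrt_pi_div_two_le_two : √(π / 2) ≤ 2 := by
  rw [sqrt_le_left zero_le_two]
  linarith [pi_le_four]

theorem pow_le_pow_mul_exp (n : ℕ) {t : ℝ} (ht : 0 ≤ t) : t ^ n ≤ n ^ n * exp t := by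
  have h := pow_div_factorial_le_exp t ht n
  rw [div_le_iff₀ (by positivity)] at h
  calc t ^ n ≤ exp t * n.factorial := h
    _ ≤ exp t * n ^ n := by gcongr; exact_mod_cast n.factorial_le_pow
    _ = _ := mul_comm _ _

theorem pow_sub_one_le_mul_exp_sq_div_four {d : ℕ} (hd : 1 ≤ d) {s : ℝ} (hs : 0 ≤ s) :
    s ^ (d - 1) ≤ 2 ^ d * (d : ℝ) ^ (((d : ℝ) + 1) / 2) * exp (s ^ 2 / 4) := by
  have hd1 : (1 : ℝ) ≤ d := by exact_mod_cast hd
  have hconst : 1 ≤ 2 ^ d * (d : ℝ) ^ (((d : ℝ) + 1) / 2) :=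
    one_le_mul_of_one_le_of_one_le (one_le_pow₀ one_le_two) (one_le_rpow hd1 (by positivity))
  rcases le_total s 1 with hs1 | hs1
  · calc s ^ (d - 1) ≤ 1 := pow_le_one₀ hs hs1
      _ ≤ 2 ^ d * (d : ℝ) ^ (((d : ℝ) + 1) / 2) * 1 := by rw [mul_one]; exact hconst
      _ ≤ _ := by gcongr; exact one_le_exp (by positivity)
  -- `n = d / 2` is the least `n` with `d - 1 ≤ 2 * n`
  set n := d / 2
  have hn : (n : ℝ) ≤ ((d : ℝ) + 1) / 2 := by
    rw [le_div_iff₀ two_pos]; exact_mod_cast (by omega : n * 2 ≤ d + 1)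
  calc s ^ (d - 1) ≤ s ^ (2 * n) := pow_le_pow_right₀ hs1 (by omega)
    _ = 4 ^ n * (s ^ 2 / 4) ^ n := by rw [pow_mul, div_pow, mul_div_cancel₀ _ (by positivity)]
    _ ≤ 4 ^ n * (n ^ n * exp (s ^ 2 / 4)) := by gcongr; exact pow_le_pow_mul_exp n (by positivity)
    _ ≤ 2 ^ d * (d : ℝ) ^ (n : ℝ) * exp (s ^ 2 / 4) := by
      rw [rpow_natCast, ← mul_assoc]
      gcongr
      · calc (4 : ℝ) ^ n = 2 ^ (2 * n) := by rw [pow_mul]; norm_num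
          _ ≤ 2 ^ d := pow_le_pow_right₀ one_le_two (by omega)
      · exact_mod_cast Nat.div_le_self d 2
    _ ≤ _ := by gcongr

theorem integral_pow_sub_one_mul_exp_neg_half_mul_sq_le {d : ℕ} (hd : 1 ≤ d) :
    ∫ s in Ioi (0 : ℝ), s ^ (d - 1) * exp (-(1 / 2) * s ^ 2) ≤
      2 ^ (d + 1) * (d : ℝ) ^ (((d : ℝ) + 1) / 2) := by
  set C := 2 ^ d * (d : ℝ) ^ (((d : ℝ) + 1) / 2)
  have hgauss : ∫ s in Ioi (0 : ℝ), exp (-(1 / 4) * s ^ 2) ≤ 2 := by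
    rw [integral_gaussian_Ioi, div_le_iff₀ two_pos, sqrt_le_left (by positivity)]
    linarith [pi_le_four]
  calc ∫ s in Ioi (0 : ℝ), s ^ (d - 1) * exp (-(1 / 2) * s ^ 2)
      ≤ ∫ s in Ioi (0 : ℝ), C * exp (-(1 / 4) * s ^ 2) := by
        refine setIntegral_mono_on (integrableOn_pow_mul_exp_neg_mul_sq (by norm_num) _)
          ((integrable_exp_neg_mul_sq (by norm_num)).integrableOn.const_mul C) measurableSet_Ioi
          fun s (hs : 0 < s) => ?_
        calc s ^ (d - 1) * exp (-(1 / 2) * s ^ 2)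
            ≤ C * exp (s ^ 2 / 4) * exp (-(1 / 2) * s ^ 2) := by
              gcongr; exact pow_sub_one_le_mul_exp_sq_div_four hd hs.le
          _ = C * exp (-(1 / 4) * s ^ 2) := by rw [mul_assoc, ← exp_add]; ring_nf
    _ ≤ C * 2 := by rw [integral_const_mul]; gcongr
    _ = _ := by rw [pow_succ]; ring

theorem mul_integral_add_pow_sub_one_mul_exp_neg_half_mul_sq_le {d : ℕ} (hd : 1 ≤ d) {R : ℝ}
    (hR : 0 ≤ R) :
    d * ∫ s in Ioi (0 : ℝ), (s + R) ^ (d - 1) * exp (-(1 / 2) * s ^ 2) ≤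
      8 ^ d * (d * R ^ (d - 1) + (d : ℝ) ^ (((d : ℝ) + 1) / 2)) := by
  set D := (d : ℝ) ^ (((d : ℝ) + 1) / 2)
  have htwo : (2 : ℝ) ^ (d - 1) * 2 = 2 ^ d := pow_sub_one_mul (by omega) 2
  have hfour : (2 : ℝ) ^ (d - 1) * 2 ^ (d + 1) = 4 ^ d := by
    rw [pow_succ', ← mul_assoc, htwo, ← mul_pow]; norm_num
  have hJ : ∫ s in Ioi (0 : ℝ), (s + R) ^ (d - 1) * exp (-(1 / 2) * s ^ 2) ≤
      2 ^ (d - 1) * (2 ^ (d + 1) * D + R ^ (d - 1) * 2) := by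
    calc _ ≤ 2 ^ (d - 1 - 1) * ((∫ s in Ioi (0 : ℝ), s ^ (d - 1) * exp (-(1 / 2) * s ^ 2)) +
          R ^ (d - 1) * ∫ s in Ioi (0 : ℝ), exp (-(1 / 2) * s ^ 2)) :=
          integral_add_pow_mul_exp_neg_mul_sq_le (by norm_num) hR (d - 1)
      _ ≤ 2 ^ (d - 1 - 1) * (2 ^ (d + 1) * D + R ^ (d - 1) * 2) := by
          gcongr
          · exact integral_pow_sub_one_mul_exp_neg_half_mul_sq_le hd
          · exact integral_exp_neg_half_mul_sq_Ioi.trans_le sqrt_pi_div_two_le_two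
      _ ≤ _ := by gcongr; exacts [one_le_two, Nat.sub_le _ _]
  calc d * ∫ s in Ioi (0 : ℝ), (s + R) ^ (d - 1) * exp (-(1 / 2) * s ^ 2)
      ≤ d * (2 ^ (d - 1) * (2 ^ (d + 1) * D + R ^ (d - 1) * 2)) := by gcongr
    _ = d * 4 ^ d * D + 2 ^ d * (d * R ^ (d - 1)) := by
      linear_combination (d * D) * hfour + (d * R ^ (d - 1)) * htwo
    _ ≤ 2 ^ d * 4 ^ d * D + 8 ^ d * (d * R ^ (d - 1)) := by
      gcongr
      · exact_mod_cast d.lt_two_pow_self.le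
      · norm_num
    _ = _ := by rw [← mul_pow]; norm_num; ring

theorem integral_compl_closedBall_exp_neg_half_mul_sq_posPart {d : ℕ} (hd : 1 ≤ d) {R : ℝ}
    (hR : 0 ≤ R) :
    ∫ x in (closedBall (0 : EuclideanSpace ℝ (Fin d)) R)ᶜ,
        exp (-(1 / 2) * (max (‖x‖ - R) 0) ^ 2) =
      d * (volume (closedBall (0 : EuclideanSpace ℝ (Fin d)) 1)).toReal *
        ∫ s in Ioi (0 : ℝ), (s + R) ^ (d - 1) * exp (-(1 / 2) * s ^ 2) := by
  have : Nontrivial (EuclideanSpace ℝ (Fin d)) := by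
    have : Nonempty (Fin d) := ⟨⟨0, hd⟩⟩
    infer_instance
  rw [integral_compl_closedBall_fun_norm_sub volume hR (fun s => exp (-(1 / 2) * (max s 0) ^ 2)),
    finrank_euclideanSpace_fin, Measure.addHaar_closedBall_eq_addHaar_ball, nsmul_eq_mul,
    smul_eq_mul, measureReal_def, mul_assoc]
  congr 2
  refine setIntegral_congr_fun measurableSet_Ioi fun s (hs : 0 < s) => ?_
  rw [max_eq_left hs.le, smul_eq_mul]

theorem stmt10 :
    ∃ C₀ : ℝ, 2 < C₀ ∧
      ∀ (d : ℕ), 1 ≤ d → ∀ R : ℝ, 0 < R →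
        Real.sqrt (π / 2) *
            (volume (Metric.closedBall (0 : EuclideanSpace ℝ (Fin d)) 1)).toReal *
            d * R ^ (d - 1) ≤
          (∫ x in (Metric.closedBall (0 : EuclideanSpace ℝ (Fin d)) R)ᶜ,
            Real.exp (-(1 / 2) * (max (‖x‖ - R) 0) ^ 2)) ∧
        (∫ x in (Metric.closedBall (0 : EuclideanSpace ℝ (Fin d)) R)ᶜ,
            Real.exp (-(1 / 2) * (max (‖x‖ - R) 0) ^ 2)) ≤
          (volume (Metric.closedBall (0 : EuclideanSpace ℝ (Fin d)) 1)).toReal *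
            C₀ ^ d * (d * R ^ (d - 1) + (d : ℝ) ^ (((d : ℝ) + 1) / 2)) := by
  refine ⟨8, by norm_num, fun d hd R hR => ?_⟩
  rw [integral_compl_closedBall_exp_neg_half_mul_sq_posPart hd hR.le]
  set V := (volume (closedBall (0 : EuclideanSpace ℝ (Fin d)) 1)).toReal
  set J := ∫ s in Ioi (0 : ℝ), (s + R) ^ (d - 1) * exp (-(1 / 2) * s ^ 2)
  have hlower : R ^ (d - 1) * √(π / 2) ≤ J := by
    simpa only [integral_exp_neg_half_mul_sq_Ioi] using
      pow_mul_integral_exp_neg_mul_sq_le (by norm_num : (0 : ℝ) < 1 / 2) hR.le (d - 1)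
  have hupper := mul_integral_add_pow_sub_one_mul_exp_neg_half_mul_sq_le hd hR.le
  constructor
  · calc √(π / 2) * V * d * R ^ (d - 1) = d * V * (R ^ (d - 1) * √(π / 2)) := by ring
      _ ≤ d * V * J := by gcongr
  · calc d * V * J = V * (d * J) := by ring
      _ ≤ _ := by rw [mul_assoc]; gcongr
end

section
/- Let I_r = ∫_{B₁} exp(r²φ(‖x‖)) dx in ℝᵈ, where φ is a decreasing bump function with φ(x) = φ(0) - x²/2 on [0,α] for some α > 0 and 0 ≤ φ ≤ φ(0). There exists a constant c_r > 0 (depending only on α and φ) such that for all r ≥ c_r√d, 1/2 ≤ rᵈ I_r / ((2π)^{d/2} exp(r²φ(0))) ≤ 2. -/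
/-!
On the ball of radius `α` the integrand is `exp(r²φ(0))` times the Gaussian `exp(-r²‖x‖²/2)`,
whose integral over `ℝᵈ` is `(2π)^{d/2} r^{-d}`. Everything else costs a factor `exp(-r²α²/4)`
against a wider Gaussian: for `‖x‖ ≥ α`,
`exp(-r²‖x‖²/2) ≤ exp(-r²α²/4) exp(-r²‖x‖²/4)`, and for `α ≤ ‖x‖ ≤ 1` monotonicity gives
`φ(‖x‖) ≤ φ(α) = φ(0) - α²/2`, so the integrand is at most
`exp(r²φ(0)) exp(-r²α²/4) exp(-α²r²‖x‖²/4)`. Integrating these pointwise bounds over `ℝᵈ`,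
the normalised integral lies within `exp(-r²α²/4) (2/α²)^{d/2}` of `1`, and this is at most
`1/2` once `r ≥ c √d`.
-/

open MeasureTheory Real Set Module

section Gaussian

variable {V : Type*} [NormedAddCommGroup V] [InnerProductSpace ℝ V] [FiniteDimensional ℝ V]
  [MeasurableSpace V] [BorelSpace V]

theorem integrable_exp_neg_mul_sq_norm {b : ℝ} (hb : 0 < b) :
    Integrable (fun v : V ↦ exp (-b * ‖v‖ ^ 2)) :=
  Integrable.of_integral_ne_zero <| by
    rw [GaussianFourier.integral_rexp_neg_mul_sq_norm hb]; positivity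

theorem integral_exp_neg_mul_sq_mul_sq_norm {c r : ℝ} (hc : 0 < c) (hr : 0 < r) :
    ∫ v : V, exp (-(c * r ^ 2) * ‖v‖ ^ 2) =
      (1 / (2 * c)) ^ (finrank ℝ V / 2 : ℝ) *
        ((2 * π) ^ (finrank ℝ V / 2 : ℝ) / r ^ finrank ℝ V) := by
  rw [GaussianFourier.integral_rexp_neg_mul_sq_norm (by positivity), ← div_div,
    div_rpow (by positivity) (by positivity), ← rpow_natCast r 2, ← rpow_mul hr.le,
    Nat.cast_ofNat, mul_div_cancel₀ _ two_ne_zero, rpow_natCast, mul_div_assoc',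
    ← mul_rpow (by positivity) (by positivity)]
  congr 3
  field_simp

end Gaussian

section Profile

variable {φ : ℝ → ℝ} {α : ℝ}

theorem exp_sq_mul_eq_of_mem_Icc (hquad : ∀ x ∈ Icc 0 α, φ x = φ 0 - x ^ 2 / 2) {t : ℝ}
    (ht : t ∈ Icc 0 α) (r : ℝ) :
    exp (r ^ 2 * φ t) = exp (r ^ 2 * φ 0) * exp (-(1 / 2 * r ^ 2) * t ^ 2) := by
  rw [hquad t ht, ← exp_add]
  ring_nf

theorem exp_sq_mul_le_of_le (hα : 0 ≤ α) (hdec : AntitoneOn φ (Ici 0))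
    (hquad : ∀ x ∈ Icc 0 α, φ x = φ 0 - x ^ 2 / 2) {t : ℝ} (ht : α ≤ t) (r : ℝ) :
    exp (r ^ 2 * φ t) ≤
      exp (r ^ 2 * φ 0) * exp (-(r ^ 2 * α ^ 2 / 4)) * exp (-(r ^ 2 * α ^ 2 / 4)) := by
  have hφ : φ t ≤ φ 0 - α ^ 2 / 2 := hquad α ⟨hα, le_rfl⟩ ▸ hdec hα (hα.trans ht) ht
  rw [← exp_add, ← exp_add, exp_le_exp]
  nlinarith [mul_le_mul_of_nonneg_left hφ (sq_nonneg r)]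

theorem exp_neg_half_mul_le (hα : 0 ≤ α) {t : ℝ} (ht : α ≤ t) (r : ℝ) :
    exp (-(1 / 2 * r ^ 2) * t ^ 2) ≤
      exp (-(r ^ 2 * α ^ 2 / 4)) * exp (-(1 / 4 * r ^ 2) * t ^ 2) := by
  rw [← exp_add, exp_le_exp]
  nlinarith [mul_le_mul_of_nonneg_left (pow_le_pow_left₀ hα ht 2) (sq_nonneg r)]

variable {V : Type*} [SeminormedAddCommGroup V]

theorem sub_le_indicator_closedBall (hα : 0 ≤ α) (hα1 : α ≤ 1)
    (hquad : ∀ x ∈ Icc 0 α, φ x = φ 0 - x ^ 2 / 2) (r : ℝ) (x : V) :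
    exp (r ^ 2 * φ 0) * (exp (-(1 / 2 * r ^ 2) * ‖x‖ ^ 2) -
        exp (-(r ^ 2 * α ^ 2 / 4)) * exp (-(1 / 4 * r ^ 2) * ‖x‖ ^ 2)) ≤
      (Metric.closedBall (0 : V) 1).indicator (fun y ↦ exp (r ^ 2 * φ ‖y‖)) x := by
  rcases le_or_gt ‖x‖ α with hx | hx
  · rw [indicator_of_mem (by simpa using hx.trans hα1),
      exp_sq_mul_eq_of_mem_Icc hquad ⟨norm_nonneg x, hx⟩]
    gcongr
    exact sub_le_self _ (by positivity)
  · calc _ ≤ 0 := mul_nonpos_of_nonneg_of_nonpos (exp_pos _).le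
          (sub_nonpos.2 (exp_neg_half_mul_le hα hx.le r))
      _ ≤ _ := indicator_nonneg (fun _ _ ↦ (exp_pos _).le) x

theorem indicator_closedBall_le (hα : 0 ≤ α) (hdec : AntitoneOn φ (Ici 0))
    (hquad : ∀ x ∈ Icc 0 α, φ x = φ 0 - x ^ 2 / 2) (r : ℝ) (x : V) :
    (Metric.closedBall (0 : V) 1).indicator (fun y ↦ exp (r ^ 2 * φ ‖y‖)) x ≤
      exp (r ^ 2 * φ 0) * (exp (-(1 / 2 * r ^ 2) * ‖x‖ ^ 2) +
        exp (-(r ^ 2 * α ^ 2 / 4)) * exp (-(α ^ 2 / 4 * r ^ 2) * ‖x‖ ^ 2)) := by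
  by_cases hx1 : ‖x‖ ≤ 1
  · rw [indicator_of_mem (by simpa using hx1)]
    rcases le_or_gt ‖x‖ α with hx | hx
    · rw [exp_sq_mul_eq_of_mem_Icc hquad ⟨norm_nonneg x, hx⟩]
      gcongr
      exact le_add_of_nonneg_right (by positivity)
    · have hx2 : ‖x‖ ^ 2 ≤ 1 := pow_le_one₀ (norm_nonneg x) hx1
      calc _ ≤ exp (r ^ 2 * φ 0) * exp (-(r ^ 2 * α ^ 2 / 4)) * exp (-(r ^ 2 * α ^ 2 / 4)) :=
            exp_sq_mul_le_of_le hα hdec hquad hx.le r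
        _ ≤ exp (r ^ 2 * φ 0) *
              (exp (-(r ^ 2 * α ^ 2 / 4)) * exp (-(α ^ 2 / 4 * r ^ 2) * ‖x‖ ^ 2)) := by
          rw [mul_assoc]
          gcongr
          nlinarith [mul_le_mul_of_nonneg_left hx2 (by positivity : 0 ≤ α ^ 2 / 4 * r ^ 2)]
        _ ≤ _ := by
          gcongr
          exact le_add_of_nonneg_left (by positivity)
  · rw [indicator_of_notMem (by simpa using hx1)]
    positivity

end Profile

section Ball

variable {V : Type*} [NormedAddCommGroup V] [InnerProductSpace ℝ V] [FiniteDimensional ℝ V]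
  [MeasurableSpace V] [BorelSpace V] {φ : ℝ → ℝ} {α r : ℝ}

theorem le_integral_closedBall_exp (hα : 0 ≤ α) (hα1 : α ≤ 1) (hcont : ContinuousOn φ (Ici 0))
    (hquad : ∀ x ∈ Icc 0 α, φ x = φ 0 - x ^ 2 / 2) (hr : 0 < r) :
    exp (r ^ 2 * φ 0) * (1 - exp (-(r ^ 2 * α ^ 2 / 4)) * 2 ^ (finrank ℝ V / 2 : ℝ)) *
        ((2 * π) ^ (finrank ℝ V / 2 : ℝ) / r ^ finrank ℝ V) ≤
      ∫ x in Metric.closedBall (0 : V) 1, exp (r ^ 2 * φ ‖x‖) := by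
  have hcont' : Continuous fun x : V ↦ exp (r ^ 2 * φ ‖x‖) :=
    continuous_exp.comp <| continuous_const.mul <|
      hcont.comp_continuous continuous_norm fun x ↦ norm_nonneg x
  rw [← integral_indicator measurableSet_closedBall]
  calc _ = ∫ x : V, exp (r ^ 2 * φ 0) * (exp (-(1 / 2 * r ^ 2) * ‖x‖ ^ 2) -
        exp (-(r ^ 2 * α ^ 2 / 4)) * exp (-(1 / 4 * r ^ 2) * ‖x‖ ^ 2)) := by
        rw [integral_const_mul, integral_sub (integrable_exp_neg_mul_sq_norm (by positivity))
          ((integrable_exp_neg_mul_sq_norm (by positivity)).const_mul _), integral_const_mul,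
          integral_exp_neg_mul_sq_mul_sq_norm (by norm_num) hr,
          integral_exp_neg_mul_sq_mul_sq_norm (by norm_num) hr]
        norm_num
        ring
    _ ≤ _ := integral_mono
        (((integrable_exp_neg_mul_sq_norm (by positivity)).sub
          ((integrable_exp_neg_mul_sq_norm (by positivity)).const_mul _)).const_mul _)
        ((hcont'.continuousOn.integrableOn_compact (isCompact_closedBall 0 1)).integrable_indicator
          measurableSet_closedBall)
        (sub_le_indicator_closedBall hα hα1 hquad r)

theorem integral_closedBall_exp_le (hα : 0 < α) (hdec : AntitoneOn φ (Ici 0))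
    (hquad : ∀ x ∈ Icc 0 α, φ x = φ 0 - x ^ 2 / 2) (hr : 0 < r) :
    ∫ x in Metric.closedBall (0 : V) 1, exp (r ^ 2 * φ ‖x‖) ≤
      exp (r ^ 2 * φ 0) *
        (1 + exp (-(r ^ 2 * α ^ 2 / 4)) * (2 / α ^ 2) ^ (finrank ℝ V / 2 : ℝ)) *
        ((2 * π) ^ (finrank ℝ V / 2 : ℝ) / r ^ finrank ℝ V) := by
  rw [← integral_indicator measurableSet_closedBall]
  calc _ ≤ ∫ x : V, exp (r ^ 2 * φ 0) * (exp (-(1 / 2 * r ^ 2) * ‖x‖ ^ 2) +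
        exp (-(r ^ 2 * α ^ 2 / 4)) * exp (-(α ^ 2 / 4 * r ^ 2) * ‖x‖ ^ 2)) :=
        integral_mono_of_nonneg
          (.of_forall fun _ ↦ indicator_nonneg (fun _ _ ↦ (exp_pos _).le) _)
          (((integrable_exp_neg_mul_sq_norm (by positivity)).add
            ((integrable_exp_neg_mul_sq_norm (by positivity)).const_mul _)).const_mul _)
          (.of_forall (indicator_closedBall_le hα.le hdec hquad r))
    _ = _ := by
        rw [integral_const_mul, integral_add (integrable_exp_neg_mul_sq_norm (by positivity))
          ((integrable_exp_neg_mul_sq_norm (by positivity)).const_mul _), integral_const_mul,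
          integral_exp_neg_mul_sq_mul_sq_norm (by norm_num) hr,
          integral_exp_neg_mul_sq_mul_sq_norm (by positivity) hr,
          show 1 / (2 * (α ^ 2 / 4)) = 2 / α ^ 2 by field_simp; ring]
        norm_num
        ring

end Ball

theorem exp_neg_mul_rpow_le_half {α u : ℝ} (hα : 0 < α) {d : ℕ} (hd : 1 ≤ d)
    (hu : d * (log (2 / α ^ 2) / 2 + 1) ≤ u) :
    exp (-u) * (2 / α ^ 2) ^ (d / 2 : ℝ) ≤ 1 / 2 := by
  have hd' : (1 : ℝ) ≤ d := by exact_mod_cast hd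
  calc exp (-u) * (2 / α ^ 2) ^ (d / 2 : ℝ) = exp (-u + log (2 / α ^ 2) * (d / 2)) := by
        rw [rpow_def_of_pos (by positivity), exp_add]
    _ ≤ exp (-1) := exp_le_exp.2 (by nlinarith)
    _ ≤ 1 / 2 := by
        rw [exp_neg, one_div]
        exact inv_anti₀ two_pos (by linarith [exp_one_gt_d9])

theorem mul_le_of_mul_sqrt_le {α κ d r : ℝ} (hα : 0 < α) (hκ : 0 ≤ κ) (hd : 0 ≤ d)
    (hr : 2 / α * √κ * √d ≤ r) : d * κ ≤ r ^ 2 * α ^ 2 / 4 := by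
  have h := pow_le_pow_left₀ (by positivity) hr 2
  rw [mul_pow, mul_pow, sq_sqrt hκ, sq_sqrt hd, div_pow] at h
  have := mul_le_mul_of_nonneg_right h (by positivity : 0 ≤ α ^ 2 / 4)
  field_simp at this ⊢
  linarith

theorem half_le_mul_div_and_mul_div_le_two {E N R I a b : ℝ} (hE : 0 < E) (hN : 0 < N)
    (hR : 0 < R) (ha : a ≤ 1 / 2) (hb : b ≤ 1 / 2) (hlow : E * (1 - a) * (N / R) ≤ I)
    (hup : I ≤ E * (1 + b) * (N / R)) :
    1 / 2 ≤ R * I / (N * E) ∧ R * I / (N * E) ≤ 2 := by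
  constructor
  · calc 1 / 2 ≤ 1 - a := by linarith
      _ = R * (E * (1 - a) * (N / R)) / (N * E) := by field_simp
      _ ≤ R * I / (N * E) := by gcongr
  · calc R * I / (N * E) ≤ R * (E * (1 + b) * (N / R)) / (N * E) := by gcongr
      _ = 1 + b := by field_simp
      _ ≤ 2 := by linarith

theorem stmt11_general (φ : ℝ → ℝ) (α : ℝ) (hα : 0 < α) (hα1 : α ≤ 1)
    (hcont : ContinuousOn φ (Ici 0))
    (hdec : AntitoneOn φ (Ici 0))
    (hquad : ∀ x ∈ Icc 0 α, φ x = φ 0 - x ^ 2 / 2) :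
    ∃ cr : ℝ, 0 < cr ∧
      ∀ (d : ℕ), 1 ≤ d → ∀ r : ℝ, cr * Real.sqrt d ≤ r →
        1 / 2 ≤ r ^ d *
            (∫ x in Metric.closedBall (0 : EuclideanSpace ℝ (Fin d)) 1,
              Real.exp (r ^ 2 * φ ‖x‖)) /
            ((2 * π) ^ ((d : ℝ) / 2) * Real.exp (r ^ 2 * φ 0)) ∧
        r ^ d *
            (∫ x in Metric.closedBall (0 : EuclideanSpace ℝ (Fin d)) 1,
              Real.exp (r ^ 2 * φ ‖x‖)) /
            ((2 * π) ^ ((d : ℝ) / 2) * Real.exp (r ^ 2 * φ 0)) ≤ 2 := by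
  have hα2 : 2 ≤ 2 / α ^ 2 := by
    rw [le_div_iff₀ (by positivity)]
    nlinarith
  have hκ : 0 < log (2 / α ^ 2) / 2 + 1 := by
    linarith [log_nonneg (by linarith : 1 ≤ 2 / α ^ 2)]
  refine ⟨2 / α * √(log (2 / α ^ 2) / 2 + 1), by positivity, fun d hd r hr ↦ ?_⟩
  have hd' : (0 : ℝ) < d := by exact_mod_cast hd
  have hr0 : 0 < r := lt_of_lt_of_le (by positivity) hr
  have hsmall := exp_neg_mul_rpow_le_half hα hd (mul_le_of_mul_sqrt_le hα hκ.le hd'.le hr)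
  have hsmall' : exp (-(r ^ 2 * α ^ 2 / 4)) * 2 ^ (d / 2 : ℝ) ≤ 1 / 2 :=
    le_trans (by gcongr) hsmall
  have hlow :=
    le_integral_closedBall_exp (V := EuclideanSpace ℝ (Fin d)) hα.le hα1 hcont hquad hr0
  have hup := integral_closedBall_exp_le (V := EuclideanSpace ℝ (Fin d)) hα hdec hquad hr0
  rw [finrank_euclideanSpace_fin] at hlow hup
  exact half_le_mul_div_and_mul_div_le_two (exp_pos _) (by positivity) (pow_pos hr0 d)
    hsmall' hsmall hlow hup

theorem stmt11 (φ : ℝ → ℝ) (α : ℝ) (hα : 0 < α) (hα1 : α ≤ 1)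
    (hcont : ContinuousOn φ (Ici 0))
    (hnn : ∀ x ≥ (0 : ℝ), 0 ≤ φ x)
    (hub : ∀ x ≥ (0 : ℝ), φ x ≤ φ 0)
    (hdec : AntitoneOn φ (Ici 0))
    (hsupp : ∀ x > (1 : ℝ), φ x = 0)
    (hquad : ∀ x ∈ Icc 0 α, φ x = φ 0 - x ^ 2 / 2) :
    ∃ cr : ℝ, 0 < cr ∧
      ∀ (d : ℕ), 1 ≤ d → ∀ r : ℝ, cr * Real.sqrt d ≤ r →
        1 / 2 ≤ r ^ d *
            (∫ x in Metric.closedBall (0 : EuclideanSpace ℝ (Fin d)) 1,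
              Real.exp (r ^ 2 * φ ‖x‖)) /
            ((2 * π) ^ ((d : ℝ) / 2) * Real.exp (r ^ 2 * φ 0)) ∧
        r ^ d *
            (∫ x in Metric.closedBall (0 : EuclideanSpace ℝ (Fin d)) 1,
              Real.exp (r ^ 2 * φ ‖x‖)) /
            ((2 * π) ^ ((d : ℝ) / 2) * Real.exp (r ^ 2 * φ 0)) ≤ 2 :=
  stmt11_general φ α hα hα1 hcont hdec hquad
end
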